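/- The Choi map φ[2,0,1] on M₃(ℂ) (φ[2,0,1](x) has diagonal part diag(2x₁₁+x₃₃, 2x₂₂+x₁₁, 2x₃₃+x₂₂) minus the diagonal of x, and off-diagonal part −xᵢⱼ for i≠j) is a positive map: it sends every positive semidefinite 3×3 matrix to a positive semidefinite matrix. -/

import Mathlib

/-!
Since `ψ(x)` is diagonal, `vᴴ φ(x) v = ∑ ψ(x)ᵢᵢ |vᵢ|² − vᴴ x v`. For `x ⪰ 0` every 2×2 principal
minor is nonnegative, so `|xᵢⱼ| ≤ aᵢ aⱼ` with `aᵢ = √xᵢᵢ`, hence `vᴴ x v ≤ (∑ aᵢ |vᵢ|)²`.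
Positivity of `φ` thus reduces to the real inequality
`(ap + bq + cr)² ≤ (2a² + c²)p² + (2b² + a²)q² + (2c² + b²)r²`, whose defect (for `a ≠ 0`)
becomes a sum of squares after multiplication by `(a² + c²)(a⁴ + a²c² + b²c²)`; its last square
carries the AM–GM gap `a⁴b² + b⁴c² + c⁴a² − 3a²b²c²`.
-/

open Matrix
open scoped ComplexOrder

/-- The diagonal part of the Choi map `ψ[2,0,1]` on `M₃(ℂ)`. -/
noncomputable def psiChoi (x : Matrix (Fin 3) (Fin 3) ℂ) : Matrix (Fin 3) (Fin 3) ℂ :=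
  Matrix.diagonal ![2 * x 0 0 + x 2 2, 2 * x 1 1 + x 0 0, 2 * x 2 2 + x 1 1]

/-- The Choi map `φ[2,0,1](x) = ψ[2,0,1](x) − x`. -/
noncomputable def phiChoi (x : Matrix (Fin 3) (Fin 3) ℂ) : Matrix (Fin 3) (Fin 3) ℂ :=
  psiChoi x - x

namespace Matrix

variable {n 𝕜 : Type*} [RCLike 𝕜]

lemma IsHermitian.posSemidef_of_re_dotProduct_mulVec_nonneg [Fintype n] {A : Matrix n n 𝕜}
    (hA : A.IsHermitian) (h : ∀ v, 0 ≤ RCLike.re (star v ⬝ᵥ A *ᵥ v)) : A.PosSemidef :=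
  .of_dotProduct_mulVec_nonneg hA fun v =>
    RCLike.nonneg_iff.mpr ⟨h v, hA.im_star_dotProduct_mulVec_self v⟩

lemma re_star_dotProduct_diagonal_mulVec [Fintype n] [DecidableEq n] (d v : n → 𝕜) :
    RCLike.re (star v ⬝ᵥ diagonal d *ᵥ v) = ∑ i, RCLike.re (d i) * ‖v i‖ ^ 2 := by
  simp only [mulVec_diagonal, dotProduct, Pi.star_apply, map_sum]
  refine Finset.sum_congr rfl fun i _ => ?_
  rw [mul_left_comm, RCLike.star_def, RCLike.conj_mul, ← RCLike.ofReal_pow, RCLike.re_mul_ofReal]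

lemma PosSemidef.norm_apply_le {A : Matrix n n 𝕜} (hA : A.PosSemidef) (i j : n) :
    ‖A i j‖ ≤ √(RCLike.re (A i i)) * √(RCLike.re (A j j)) := by
  have hminor := (hA.submatrix ![i, j]).det_nonneg
  rw [det_fin_two] at hminor
  simp only [submatrix_apply, cons_val_zero, cons_val_one] at hminor
  rw [← hA.isHermitian.apply j i, RCLike.star_def, RCLike.mul_conj,
    ← hA.isHermitian.coe_re_apply_self i, ← hA.isHermitian.coe_re_apply_self j] at hminor
  norm_cast at hminor
  rw [← Real.sqrt_mul (RCLike.nonneg_iff.mp hA.diag_nonneg).1]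
  exact Real.le_sqrt_of_sq_le (sub_nonneg.mp hminor)

lemma PosSemidef.re_dotProduct_mulVec_le [Fintype n] {A : Matrix n n 𝕜} (hA : A.PosSemidef)
    (v : n → 𝕜) : RCLike.re (star v ⬝ᵥ A *ᵥ v) ≤ (∑ i, √(RCLike.re (A i i)) * ‖v i‖) ^ 2 := by
  rw [sq, Finset.sum_mul_sum]
  simp only [dotProduct, mulVec, Finset.mul_sum, map_sum]
  gcongr with i _ j _
  calc RCLike.re (star v i * (A i j * v j)) ≤ ‖star v i * (A i j * v j)‖ := RCLike.re_le_norm _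
    _ = ‖v i‖ * ‖A i j‖ * ‖v j‖ := by rw [norm_mul, norm_mul, Pi.star_apply, norm_star, mul_assoc]
    _ ≤ ‖v i‖ * (√(RCLike.re (A i i)) * √(RCLike.re (A j j))) * ‖v j‖ := by
        gcongr; exact hA.norm_apply_le i j
    _ = _ := by ring

end Matrix

lemma sq_add_add_le_choi (a b c p q r : ℝ) :
    (a * p + b * q + c * r) ^ 2 ≤
      (2 * a ^ 2 + c ^ 2) * p ^ 2 + (2 * b ^ 2 + a ^ 2) * q ^ 2 + (2 * c ^ 2 + b ^ 2) * r ^ 2 := by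
  rcases eq_or_ne a 0 with rfl | ha
  · nlinarith [sq_nonneg (b * q - c * r), sq_nonneg (b * r), sq_nonneg (c * p)]
  have hgap : 3 * a ^ 2 * b ^ 2 * c ^ 2 ≤ a ^ 4 * b ^ 2 + b ^ 4 * c ^ 2 + c ^ 4 * a ^ 2 := by
    nlinarith [mul_nonneg (sq_nonneg b) (sq_nonneg (a ^ 2 - c ^ 2)),
      mul_nonneg (sq_nonneg c) (sq_nonneg (b ^ 2 - a ^ 2)),
      mul_nonneg (sq_nonneg a) (sq_nonneg (c ^ 2 - b ^ 2))]
  set d := a ^ 4 + a ^ 2 * c ^ 2 + b ^ 2 * c ^ 2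
  have hK : 0 < (a ^ 2 + c ^ 2) * d := by positivity
  refine sub_nonneg.mp (nonneg_of_mul_nonneg_right ?_ hK)
  -- Complete the square in `p` (pivot `a² + c²`), then in `q` (pivot `d / (a² + c²)`).
  have hsos : (a ^ 2 + c ^ 2) * d * ((2 * a ^ 2 + c ^ 2) * p ^ 2 + (2 * b ^ 2 + a ^ 2) * q ^ 2
        + (2 * c ^ 2 + b ^ 2) * r ^ 2 - (a * p + b * q + c * r) ^ 2)
      = d * ((a ^ 2 + c ^ 2) * p - a * b * q - a * c * r) ^ 2
        + (d * q - b * c * (2 * a ^ 2 + c ^ 2) * r) ^ 2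
        + (a ^ 2 + c ^ 2) * (a ^ 4 * b ^ 2 + b ^ 4 * c ^ 2 + c ^ 4 * a ^ 2
          - 3 * a ^ 2 * b ^ 2 * c ^ 2) * r ^ 2 := by
    simp only [d]; ring
  rw [hsos]
  positivity

lemma isHermitian_psiChoi {x : Matrix (Fin 3) (Fin 3) ℂ} (hx : x.IsHermitian) :
    (psiChoi x).IsHermitian := by
  rw [psiChoi, ← hx.coe_re_apply_self 0, ← hx.coe_re_apply_self 1, ← hx.coe_re_apply_self 2]
  refine isHermitian_diagonal_iff.mpr fun i => ?_
  fin_cases i <;> simp [IsSelfAdjoint]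

/-- The Choi map `φ[2,0,1]` is a positive map: it sends every positive semidefinite
3×3 matrix to a positive semidefinite matrix. -/
theorem phiChoi_positive (x : Matrix (Fin 3) (Fin 3) ℂ) (hx : x.PosSemidef) :
    (phiChoi x).PosSemidef := by
  rw [phiChoi]
  refine ((isHermitian_psiChoi hx.isHermitian).sub hx.isHermitian)
    |>.posSemidef_of_re_dotProduct_mulVec_nonneg fun v => ?_
  rw [sub_mulVec, dotProduct_sub, map_sub, sub_nonneg, psiChoi,
    re_star_dotProduct_diagonal_mulVec]
  have hsq : ∀ i, RCLike.re (x i i) = √(RCLike.re (x i i)) ^ 2 := fun i =>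
    (Real.sq_sqrt (RCLike.nonneg_iff.mp hx.diag_nonneg).1).symm
  calc RCLike.re (star v ⬝ᵥ x *ᵥ v) ≤ (∑ i, √(RCLike.re (x i i)) * ‖v i‖) ^ 2 :=
        hx.re_dotProduct_mulVec_le v
    _ ≤ _ := by
      simp only [Fin.sum_univ_three, cons_val_zero, cons_val_one, cons_val_two, tail_cons, head_cons,
        map_add, RCLike.ofNat_mul_re]
      refine (sq_add_add_le_choi _ _ _ _ _ _).trans_eq ?_
      rw [← hsq 0, ← hsq 1, ← hsq 2]
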